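/- Transport lemma for the canonical game: For any maximal consistent set X_0, any outcomes ω, ω' of the canonical game G(X_0), any coalition C, and any formula φ ∈ Φ, if ω ∼_C ω' and K_C φ ∈ hd(ω), then φ ∈ hd(ω'). -/

import Mathlib

inductive Formula (A Prp : Type) : Type
  | var : Prp → Formula A Prp
  | bot : Formula A Prp
  | neg : Formula A Prp → Formula A Prp
  | imp : Formula A Prp → Formula A Prp → Formula A Prp
  | know : Set A → Formula A Prp → Formula A Prp
  | blame : Set A → Formula A Prp → Formula A Prp

namespace Formula
variable {A Prp : Type}
def top : Formula A Prp := neg bot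
def or (φ ψ : Formula A Prp) : Formula A Prp := imp (neg φ) ψ
def and (φ ψ : Formula A Prp) : Formula A Prp := neg (imp φ (neg ψ))
def kbar (C : Set A) (φ : Formula A Prp) : Formula A Prp := neg (know C (neg φ))
end Formula

def evalF {A Prp : Type} (v : Formula A Prp → Prop) : Formula A Prp → Prop
  | .var p => v (.var p)
  | .bot => False
  | .neg φ => ¬ evalF v φ
  | .imp φ ψ => evalF v φ → evalF v ψ
  | .know C φ => v (.know C φ)
  | .blame C φ => v (.blame C φ)

def Tautology {A Prp : Type} (φ : Formula A Prp) : Prop := ∀ v, evalF v φ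

inductive Provable {A Prp : Type} : Formula A Prp → Prop
  | taut {φ} : Tautology φ → Provable φ
  | truthK {C φ} : Provable (.imp (.know C φ) φ)
  | truthB {C φ} : Provable (.imp (.blame C φ) φ)
  | distr {C φ ψ} : Provable (.imp (.know C (.imp φ ψ)) (.imp (.know C φ) (.know C ψ)))
  | negIntro {C φ} : Provable (.imp (.neg (.know C φ)) (.know C (.neg (.know C φ))))
  | monoK {C D φ} (h : C ⊆ D) : Provable (.imp (.know C φ) (.know D φ))
  | monoB {C D φ} (h : C ⊆ D) : Provable (.imp (.blame C φ) (.blame D φ))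
  | noneBlame {φ} : Provable (.neg (.blame (∅ : Set A) φ))
  | blameTop {C} : Provable (.neg (.blame C Formula.top))
  | jointResp {C D φ ψ} (h : Disjoint C D) :
      Provable (.imp (.and (.kbar C (.blame C φ)) (.kbar D (.blame D ψ)))
        (.imp (.or φ ψ) (.blame (C ∪ D) (.or φ ψ))))
  | knownCause {C φ ψ} :
      Provable (.imp (.know C (.imp φ ψ)) (.imp (.blame C ψ) (.imp φ (.blame C φ))))
  | fairness {C φ} : Provable (.imp (.blame C φ) (.know C (.imp φ (.blame C φ))))
  | mp {φ ψ} : Provable (.imp φ ψ) → Provable φ → Provable ψ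
  | nec {C φ} : Provable φ → Provable (.know C φ)

inductive ProvableFrom {A Prp : Type} (X : Set (Formula A Prp)) : Formula A Prp → Prop
  | thm {φ} : Provable φ → ProvableFrom X φ
  | hyp {φ} : φ ∈ X → ProvableFrom X φ
  | mp {φ ψ} : ProvableFrom X (.imp φ ψ) → ProvableFrom X φ → ProvableFrom X ψ

def Consistent {A Prp : Type} (X : Set (Formula A Prp)) : Prop :=
  ¬ ProvableFrom X Formula.bot

/-- Maximal consistent set of formulae. -/
def MaxCons {A Prp : Type} (X : Set (Formula A Prp)) : Prop :=
  Consistent X ∧ ∀ Y, Consistent Y → X ⊆ Y → Y = X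

/-- A valid chain `C₁, X₁, …, Cₙ, Xₙ` extending a set `X`: each `Xᵢ` is maximal
consistent and `{φ | K_{Cᵢ} φ ∈ X_{i-1}} ⊆ Xᵢ`. -/
def ValidChain {A Prp : Type} :
    Set (Formula A Prp) → List (Set A × Set (Formula A Prp)) → Prop
  | _, [] => True
  | X, (C, Y) :: rest =>
      MaxCons Y ∧ (∀ φ, Formula.know C φ ∈ X → φ ∈ Y) ∧ ValidChain Y rest

/-- Outcomes of the canonical game `G(X₀)`: the sequences `X₀, C₁, X₁, …, Cₙ, Xₙ`. -/
def COutcome {A Prp : Type} (X₀ : Set (Formula A Prp)) :=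
  {l : List (Set A × Set (Formula A Prp)) // ValidChain X₀ l}

/-- `hd ω`: the last maximal consistent set of the sequence ω. -/
def hd {A Prp : Type} (X₀ : Set (Formula A Prp)) (ω : COutcome X₀) :
    Set (Formula A Prp) :=
  (ω.1.map Prod.snd).getLastD X₀

/-- `ω ∼_a ω'`: every edge along the unique path between the tree nodes ω and ω'
is labeled with agent a (equivalently, after removing a common prefix, every
coalition label remaining in either sequence contains a). -/
def simOut {A Prp : Type} (X₀ : Set (Formula A Prp)) (a : A) (ω ω' : COutcome X₀) : Prop :=
  ∃ ρ t₁ t₂, ω.1 = ρ ++ t₁ ∧ ω'.1 = ρ ++ t₂ ∧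
    (∀ st ∈ t₁, a ∈ st.1) ∧ (∀ st ∈ t₂, a ∈ st.1)

/-- `ω ∼_C ω'`. -/
def simOutC {A Prp : Type} (X₀ : Set (Formula A Prp)) (C : Set A)
    (ω ω' : COutcome X₀) : Prop :=
  ∀ a ∈ C, simOut X₀ a ω ω'

/-- Initial states of the canonical game: equivalence classes Ω/∼_𝒜. -/
def CanonI {A Prp : Type} (X₀ : Set (Formula A Prp)) :=
  Quot (fun ω ω' : COutcome X₀ => ∀ a : A, simOut X₀ a ω ω')

/-- `α ∼_C α'` on initial states. -/
def simIC {A Prp : Type} (X₀ : Set (Formula A Prp)) (C : Set A)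
    (α α' : CanonI X₀) : Prop :=
  ∃ ω ω' : COutcome X₀, Quot.mk _ ω = α ∧ Quot.mk _ ω' = α' ∧ simOutC X₀ C ω ω'

/-- Plays of the canonical game `G(X₀)`: triples `(α, δ, ω)` such that `ω ∈ α` and
for every formula `K̄_C B_C ψ ∈ hd(ω)`, if `δ(a) = ψ` for each `a ∈ C`, then
`¬ψ ∈ hd(ω)`. The set of actions is Δ = Φ. -/
def CanonP {A Prp : Type} (X₀ : Set (Formula A Prp)) :
    Set (CanonI X₀ × (A → Formula A Prp) × COutcome X₀) :=
  {t | Quot.mk _ t.2.2 = t.1 ∧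
    ∀ (C : Set A) (ψ : Formula A Prp),
      Formula.kbar C (Formula.blame C ψ) ∈ hd X₀ t.2.2 →
      (∀ a ∈ C, t.2.1 a = ψ) → Formula.neg ψ ∈ hd X₀ t.2.2}

/-!
Knowledge formulas `K_C φ` travel along every edge whose label contains `C`: forwards by
positive introspection and monotonicity, backwards by negative introspection and monotonicity.
If `ω ∼_C ω'`, the path between them climbs from `ω` to the longest common prefix of the two
sequences and descends to `ω'` along edges labelled by supersets of `C`, so `K_C φ ∈ hd(ω')`,
and the Truth axiom gives `φ ∈ hd(ω')`.
-/

section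

variable {A Prp : Type}

namespace Provable

theorem imp_trans {φ ψ χ : Formula A Prp} (h₁ : Provable (.imp φ ψ)) (h₂ : Provable (.imp ψ χ)) :
    Provable (.imp φ χ) :=
  .mp (.mp (.taut (φ := .imp (.imp φ ψ) (.imp (.imp ψ χ) (.imp φ χ)))
    (by intro v; simp only [evalF]; tauto)) h₁) h₂

theorem know_imp_know {C : Set A} {φ ψ : Formula A Prp} (h : Provable (.imp φ ψ)) :
    Provable (.imp (.know C φ) (.know C ψ)) :=
  .mp .distr (.nec h)

theorem know_imp_know_know {C : Set A} {φ : Formula A Prp} :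
    Provable (.imp (.know C φ) (.know C (.know C φ))) := by
  have h₁ : Provable (.imp (.know C φ) (.neg (.know C (.neg (.know C φ))))) :=
    .mp (.taut (by intro v; simp only [evalF]; tauto)) (.truthK (C := C) (φ := .neg (.know C φ)))
  have h₂ : Provable (.imp (.neg (.know C (.neg (.know C φ)))) (.know C φ)) :=
    .mp (.taut (by intro v; simp only [evalF]; tauto)) (.negIntro (C := C) (φ := φ))
  exact imp_trans (imp_trans h₁ .negIntro) (know_imp_know h₂)

end Provable

theorem ProvableFrom.deduction {X : Set (Formula A Prp)} {φ ψ : Formula A Prp}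
    (h : ProvableFrom (insert φ X) ψ) : ProvableFrom X (.imp φ ψ) := by
  induction h with
  | thm h => exact .mp (.thm (.taut (by intro v; simp only [evalF]; tauto))) (.thm h)
  | hyp h =>
      rcases h with rfl | h
      · exact .thm (.taut (by intro v; simp only [evalF]; tauto))
      · exact .mp (.thm (.taut (by intro v; simp only [evalF]; tauto))) (.hyp h)
  | mp _ _ ih₁ ih₂ => exact .mp (.mp (.thm (.taut (by intro v; simp only [evalF]; tauto))) ih₁) ih₂

namespace MaxCons

variable {X : Set (Formula A Prp)} {φ ψ : Formula A Prp}

theorem insert_eq_of_consistent (hX : MaxCons X) (h : Consistent (insert φ X)) :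
    insert φ X = X :=
  hX.2 _ h (Set.subset_insert _ _)

theorem mem_of_provableFrom (hX : MaxCons X) (h : ProvableFrom X φ) : φ ∈ X := by
  have hcons : Consistent (insert φ X) := fun hbot => hX.1 (.mp hbot.deduction h)
  rw [← hX.insert_eq_of_consistent hcons]
  exact Set.mem_insert _ _

theorem mem_of_provable (hX : MaxCons X) (h : Provable φ) : φ ∈ X :=
  hX.mem_of_provableFrom (.thm h)

theorem mem_of_imp_mem (hX : MaxCons X) (h : Formula.imp φ ψ ∈ X) (hφ : φ ∈ X) : ψ ∈ X :=
  hX.mem_of_provableFrom (.mp (.hyp h) (.hyp hφ))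

theorem mem_of_provable_imp (hX : MaxCons X) (h : Provable (.imp φ ψ)) (hφ : φ ∈ X) : ψ ∈ X :=
  hX.mem_of_imp_mem (hX.mem_of_provable h) hφ

theorem neg_mem_of_not_mem (hX : MaxCons X) (h : φ ∉ X) : Formula.neg φ ∈ X := by
  have hbot : ProvableFrom (insert φ X) .bot := by
    by_contra hcons
    exact h (hX.insert_eq_of_consistent hcons ▸ Set.mem_insert φ X)
  exact hX.mem_of_provableFrom (.mp (.thm (.taut (by intro v; simp only [evalF]; tauto)))
    hbot.deduction)

theorem not_mem_of_neg_mem (hX : MaxCons X) (h : Formula.neg φ ∈ X) : φ ∉ X := fun hφ =>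
  hX.1 (.mp (.mp (.thm (.taut (φ := .imp φ (.imp (.neg φ) .bot))
    (by intro v; simp only [evalF]; tauto))) (.hyp hφ)) (.hyp h))

theorem know_mem_iff_of_edge {Y : Set (Formula A Prp)} {C D : Set A} (hX : MaxCons X)
    (hY : MaxCons Y) (hXY : ∀ ψ, Formula.know D ψ ∈ X → ψ ∈ Y) (hCD : C ⊆ D) :
    Formula.know C φ ∈ X ↔ Formula.know C φ ∈ Y := by
  refine ⟨fun h => hXY _ ?_, fun h => ?_⟩
  · exact hX.mem_of_provable_imp (Provable.imp_trans .know_imp_know_know (.monoK hCD)) h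
  · by_contra hn
    have hD := hX.mem_of_provable_imp (Provable.imp_trans .negIntro (.monoK hCD))
      (hX.neg_mem_of_not_mem hn)
    exact hY.not_mem_of_neg_mem (hXY _ hD) h

end MaxCons

namespace List

variable {α : Type*}

theorem exists_longest_common_prefix :
    ∀ l₁ l₂ : List α, ∃ ρ, ρ <+: l₁ ∧ ρ <+: l₂ ∧ ∀ σ, σ <+: l₁ → σ <+: l₂ → σ <+: ρ
  | [], _ => ⟨[], nil_prefix, nil_prefix, fun σ h _ => h⟩
  | _ :: _, [] => ⟨[], nil_prefix, nil_prefix, fun σ _ h => h⟩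
  | a :: l₁, b :: l₂ => by
    by_cases hab : a = b
    · subst hab
      obtain ⟨ρ, h₁, h₂, hmax⟩ := exists_longest_common_prefix l₁ l₂
      refine ⟨a :: ρ, (prefix_cons_inj _).2 h₁, (prefix_cons_inj _).2 h₂, ?_⟩
      rintro (_ | ⟨c, σ⟩) hσ₁ hσ₂
      · exact nil_prefix
      · obtain ⟨rfl, hσ⟩ := cons_prefix_cons.1 hσ₁
        exact (prefix_cons_inj _).2 (hmax σ hσ (cons_prefix_cons.1 hσ₂).2)
    · refine ⟨[], nil_prefix, nil_prefix, ?_⟩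
      rintro (_ | ⟨c, σ⟩) hσ₁ hσ₂
      · exact nil_prefix
      · exact absurd ((cons_prefix_cons.1 hσ₁).1.symm.trans (cons_prefix_cons.1 hσ₂).1) hab

theorem exists_common_split_of_forall {ι : Type*} {I : Set ι} {P : ι → α → Prop}
    {l₁ l₂ : List α}
    (h : ∀ i ∈ I, ∃ ρ t₁ t₂, l₁ = ρ ++ t₁ ∧ l₂ = ρ ++ t₂ ∧ (∀ x ∈ t₁, P i x) ∧ ∀ x ∈ t₂, P i x) :
    ∃ ρ t₁ t₂, l₁ = ρ ++ t₁ ∧ l₂ = ρ ++ t₂ ∧ ∀ i ∈ I, (∀ x ∈ t₁, P i x) ∧ ∀ x ∈ t₂, P i x := by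
  obtain ⟨ρ, ⟨t₁, rfl⟩, ⟨t₂, rfl⟩, hmax⟩ := exists_longest_common_prefix l₁ l₂
  refine ⟨ρ, t₁, t₂, rfl, rfl, fun i hi => ?_⟩
  obtain ⟨ρ', u₁, u₂, e₁, e₂, hu₁, hu₂⟩ := h i hi
  obtain ⟨δ, rfl⟩ := hmax ρ' ⟨u₁, e₁.symm⟩ ⟨u₂, e₂.symm⟩
  rw [append_assoc] at e₁ e₂
  refine ⟨fun x hx => hu₁ x ?_, fun x hx => hu₂ x ?_⟩
  · rw [← append_cancel_left e₁]; exact mem_append_right δ hx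
  · rw [← append_cancel_left e₂]; exact mem_append_right δ hx

end List

def chainLast (X : Set (Formula A Prp)) (l : List (Set A × Set (Formula A Prp))) :
    Set (Formula A Prp) :=
  (l.map Prod.snd).getLastD X

@[simp] theorem chainLast_cons (X : Set (Formula A Prp)) (e : Set A × Set (Formula A Prp))
    (l : List (Set A × Set (Formula A Prp))) : chainLast X (e :: l) = chainLast e.2 l := by
  simp only [chainLast, List.map_cons, List.getLastD_cons]

theorem chainLast_append (X : Set (Formula A Prp)) (l₁ l₂ : List (Set A × Set (Formula A Prp))) :
    chainLast X (l₁ ++ l₂) = chainLast (chainLast X l₁) l₂ := by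
  induction l₁ generalizing X with
  | nil => rfl
  | cons e l ih => simp [ih]

namespace ValidChain

variable {X : Set (Formula A Prp)} {l l₁ l₂ : List (Set A × Set (Formula A Prp))}

theorem of_append (h : ValidChain X (l₁ ++ l₂)) :
    ValidChain X l₁ ∧ ValidChain (chainLast X l₁) l₂ := by
  induction l₁ generalizing X with
  | nil => exact ⟨trivial, h⟩
  | cons e l ih =>
      obtain ⟨hY, hXY, hrest⟩ := h
      exact ⟨⟨hY, hXY, (ih hrest).1⟩, by simpa only [chainLast_cons] using (ih hrest).2⟩

theorem maxCons_chainLast (h : ValidChain X l) (hX : MaxCons X) : MaxCons (chainLast X l) := by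
  induction l generalizing X with
  | nil => exact hX
  | cons e l ih => simpa only [chainLast_cons] using ih h.2.2 h.1

theorem know_mem_iff {C : Set A} {φ : Formula A Prp} (h : ValidChain X l) (hX : MaxCons X)
    (hC : ∀ e ∈ l, C ⊆ e.1) :
    Formula.know C φ ∈ X ↔ Formula.know C φ ∈ chainLast X l := by
  induction l generalizing X with
  | nil => rfl
  | cons e l ih =>
      obtain ⟨hY, hXY, hrest⟩ := h
      rw [hX.know_mem_iff_of_edge hY hXY (hC e List.mem_cons_self), chainLast_cons]
      exact ih hrest hY fun e' he' => hC e' (List.mem_cons_of_mem _ he')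

end ValidChain

section CanonicalGame

variable {X₀ : Set (Formula A Prp)} {C : Set A}

theorem maxCons_hd (hX₀ : MaxCons X₀) (ω : COutcome X₀) : MaxCons (hd X₀ ω) :=
  ω.2.maxCons_chainLast hX₀

theorem simOutC.exists_split {ω ω' : COutcome X₀} (h : simOutC X₀ C ω ω') :
    ∃ ρ t₁ t₂, ω.1 = ρ ++ t₁ ∧ ω'.1 = ρ ++ t₂ ∧ (∀ e ∈ t₁, C ⊆ e.1) ∧ ∀ e ∈ t₂, C ⊆ e.1 := by
  obtain ⟨ρ, t₁, t₂, h₁, h₂, hC⟩ :=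
    List.exists_common_split_of_forall (P := fun a (e : Set A × _) => a ∈ e.1) h
  exact ⟨ρ, t₁, t₂, h₁, h₂, fun e he a ha => (hC a ha).1 e he, fun e he a ha => (hC a ha).2 e he⟩

theorem know_mem_hd_iff_of_simOutC (hX₀ : MaxCons X₀) {ω ω' : COutcome X₀}
    (h : simOutC X₀ C ω ω') {φ : Formula A Prp} :
    Formula.know C φ ∈ hd X₀ ω ↔ Formula.know C φ ∈ hd X₀ ω' := by
  obtain ⟨ρ, t₁, t₂, h₁, h₂, hC₁, hC₂⟩ := h.exists_split
  obtain ⟨hρ, ht₁⟩ := (h₁ ▸ ω.2 : ValidChain X₀ (ρ ++ t₁)).of_append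
  have ht₂ := (h₂ ▸ ω'.2 : ValidChain X₀ (ρ ++ t₂)).of_append.2
  have hM := hρ.maxCons_chainLast hX₀
  change _ ∈ chainLast X₀ ω.1 ↔ _ ∈ chainLast X₀ ω'.1
  rw [h₁, h₂, chainLast_append, chainLast_append, ← ht₁.know_mem_iff hM hC₁,
    ← ht₂.know_mem_iff hM hC₂]

end CanonicalGame

end

/-- Transport lemma for the canonical game: if ω ∼_C ω' and K_C φ ∈ hd(ω),
then φ ∈ hd(ω'). -/
theorem transport {A Prp : Type} (X₀ : Set (Formula A Prp)) (hX₀ : MaxCons X₀)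
    (ω ω' : COutcome X₀) (C : Set A) (φ : Formula A Prp)
    (h1 : simOutC X₀ C ω ω') (h2 : Formula.know C φ ∈ hd X₀ ω) :
    φ ∈ hd X₀ ω' :=
  (maxCons_hd hX₀ ω').mem_of_provable_imp .truthK ((know_mem_hd_iff_of_simOutC hX₀ h1).1 h2)
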